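/- arXiv:2006.02124 — 4 statements merged into one kernel-verified Lean document; each statement's English description precedes it below -/
import Mathlib

section
/- Let G be a graph, H a graph with root vertex v ∈ V(H), and let f be a γ_I(G∘_v H)-function. Then for every x ∈ V(G), the weight of the restriction f_x of f to the copy H_x satisfies ω(f_x) ≥ γ_I(H) − 1; moreover, if ω(f_x) = γ_I(H) − 1, then f(x) = 0. -/
open Finset

open scoped Classical

/-- An Italian dominating function on a finite simple graph: values in {0,1,2} and
every vertex with value 0 has neighbour values summing to at least 2. -/
noncomputable def IsIDF {α : Type*} [Fintype α] (G : SimpleGraph α) (f : α → ℕ) : Prop :=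
  (∀ u, f u ≤ 2) ∧
    ∀ u, f u = 0 → 2 ≤ ∑ w ∈ Finset.univ.filter (fun w => G.Adj u w), f w

/-- The Italian domination number γ_I(G). -/
noncomputable def italianNumber {α : Type*} [Fintype α] (G : SimpleGraph α) : ℕ :=
  sInf {n | ∃ f : α → ℕ, IsIDF G f ∧ ∑ u, f u = n}

/-- A γ_I(G)-function: an IDF on G of minimum weight. -/
noncomputable def IsMinIDF {α : Type*} [Fintype α] (G : SimpleGraph α) (f : α → ℕ) : Prop :=
  IsIDF G f ∧ ∑ u, f u = italianNumber G

/-- D is a dominating set of G. -/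
def IsDomSet {α : Type*} (G : SimpleGraph α) (D : Set α) : Prop :=
  ∀ u ∉ D, ∃ w ∈ D, G.Adj u w

/-- The domination number γ(G). -/
noncomputable def dominationNumber {α : Type*} [Fintype α] (G : SimpleGraph α) : ℕ :=
  sInf {n | ∃ D : Finset α, IsDomSet G ↑D ∧ D.card = n}

/-- The degree of a vertex. -/
noncomputable def deg {α : Type*} [Fintype α] (G : SimpleGraph α) (u : α) : ℕ :=
  (Finset.univ.filter (fun w => G.Adj u w)).card

/-- The rooted product G∘_v H: one copy of H for each vertex of G, the root v of the
x-th copy being identified with the vertex x of G. The pair (x, y) is the vertex y of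
the x-th copy of H; in particular (x, v) is the vertex x of G. -/
def rootedProd {α β : Type*} (G : SimpleGraph α) (H : SimpleGraph β) (v : β) :
    SimpleGraph (α × β) where
  Adj p q := (p.1 = q.1 ∧ H.Adj p.2 q.2) ∨ (p.2 = v ∧ q.2 = v ∧ G.Adj p.1 q.1)
  symm := by
    constructor
    rintro ⟨x, y⟩ ⟨x', y'⟩ (⟨h1, h2⟩ | ⟨h1, h2, h3⟩)
    · exact Or.inl ⟨h1.symm, h2.symm⟩
    · exact Or.inr ⟨h2, h1, h3.symm⟩
  loopless := by
    constructor
    rintro ⟨x, y⟩ (⟨_, h⟩ | ⟨_, _, h⟩)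
    · exact H.loopless.irrefl _ h
    · exact G.loopless.irrefl _ h

/-- The weight ω(f_x) of the restriction of f to the copy H_x. -/
def copyWeight {α β : Type*} [Fintype β] (f : α × β → ℕ) (x : α) : ℕ :=
  ∑ y, f (x, y)

/-- The graph H − {v} obtained from H by deleting the vertex v. -/
def deleteVertex {β : Type*} (H : SimpleGraph β) (v : β) : SimpleGraph {w : β // w ≠ v} :=
  SimpleGraph.induce {w : β | w ≠ v} H

/-! Given an IDF `f` on `G ∘_v H`, the restriction `f_x` already satisfies the Italian
condition at every non-root vertex of `H_x`, since such a vertex has all its neighbours inside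
`H_x`. Raising the root value to at least `1` repairs the root as well, because a positive value
needs no condition; this gives an IDF on `H` of weight at most `ω(f_x) + 1`, and of weight
exactly `ω(f_x)` when `f(x) ≥ 1`. -/

theorem italianNumber_le_sum {α : Type*} [Fintype α] {G : SimpleGraph α} {f : α → ℕ}
    (hf : IsIDF G f) : italianNumber G ≤ ∑ u, f u :=
  Nat.sInf_le ⟨f, hf, rfl⟩

def raiseAt {β : Type*} [DecidableEq β] (φ : β → ℕ) (v : β) : β → ℕ :=
  Function.update φ v (max (φ v) 1)

theorem raiseAt_of_ne_zero {β : Type*} [DecidableEq β] {φ : β → ℕ} {v : β} (hv : φ v ≠ 0) :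
    raiseAt φ v = φ := by
  rw [raiseAt, max_eq_left (Nat.one_le_iff_ne_zero.mpr hv), Function.update_eq_self]

section RaiseAt

variable {β : Type*} [Fintype β] [DecidableEq β]

theorem sum_raiseAt_le (φ : β → ℕ) (v : β) : ∑ y, raiseAt φ v y ≤ ∑ y, φ y + 1 := by
  rw [raiseAt, sum_update_of_mem (mem_univ v), sum_eq_add_sum_sdiff_singleton_of_mem (mem_univ v)]
  omega

theorem isIDF_raiseAt {H : SimpleGraph β} {φ : β → ℕ} {v : β} (hle : ∀ y, φ y ≤ 2)
    (hdom : ∀ y, y ≠ v → φ y = 0 → 2 ≤ ∑ w ∈ univ.filter (fun w => H.Adj y w), φ w) :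
    IsIDF H (raiseAt φ v) := by
  have hmono : ∀ y, φ y ≤ raiseAt φ v y := by
    intro y
    rcases eq_or_ne y v with rfl | hy
    · simp [raiseAt]
    · simp [raiseAt, hy]
  refine ⟨fun y => ?_, fun y hy0 => ?_⟩
  · rcases eq_or_ne y v with rfl | hy
    · simpa [raiseAt] using hle y
    · simpa [raiseAt, hy] using hle y
  · have hyv : y ≠ v := by
      rintro rfl
      simp [raiseAt] at hy0
    have hφ0 : φ y = 0 := by simpa [raiseAt, hyv] using hy0
    exact (hdom y hyv hφ0).trans (sum_le_sum fun w _ => hmono w)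

end RaiseAt

theorem le_copyWeight {α β : Type*} [Fintype β] (f : α × β → ℕ) (x : α) (y : β) :
    f (x, y) ≤ copyWeight f x :=
  single_le_sum (f := fun y => f (x, y)) (fun _ _ => Nat.zero_le _) (mem_univ y)

section RootedProd

variable {α β : Type*} {G : SimpleGraph α} {H : SimpleGraph β} {v : β}

theorem rootedProd_adj_of_ne_root {y : β} (hy : y ≠ v) (x : α) (q : α × β) :
    (rootedProd G H v).Adj (x, y) q ↔ q.1 = x ∧ H.Adj y q.2 := by
  simp [rootedProd, hy, @eq_comm _ x]

variable [Fintype α] [Fintype β]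

theorem sum_rootedProd_neighbors_of_ne_root {y : β} (hy : y ≠ v) (x : α) (f : α × β → ℕ) :
    ∑ w ∈ univ.filter (fun w => (rootedProd G H v).Adj (x, y) w), f w
      = ∑ y' ∈ univ.filter (fun y' => H.Adj y y'), f (x, y') := by
  have hnbrs : univ.filter (fun w => (rootedProd G H v).Adj (x, y) w)
      = (univ.filter (fun y' => H.Adj y y')).image (Prod.mk x) := by
    ext ⟨x', y'⟩
    simp [rootedProd_adj_of_ne_root hy, and_comm, @eq_comm _ x]
  rw [hnbrs, sum_image fun _ _ _ _ h => Prod.mk_right_injective x h]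

variable {f : α × β → ℕ}

theorem isIDF_raiseAt_restrict_rootedProd (hf : IsIDF (rootedProd G H v) f) (x : α) :
    IsIDF H (raiseAt (fun y => f (x, y)) v) :=
  isIDF_raiseAt (fun y => hf.1 (x, y)) fun y hy hy0 => by
    simpa only [sum_rootedProd_neighbors_of_ne_root hy] using hf.2 (x, y) hy0

theorem italianNumber_le_copyWeight_add_one (hf : IsIDF (rootedProd G H v) f) (x : α) :
    italianNumber H ≤ copyWeight f x + 1 :=
  (italianNumber_le_sum (isIDF_raiseAt_restrict_rootedProd hf x)).trans (sum_raiseAt_le _ v)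

theorem italianNumber_le_copyWeight_of_ne_zero (hf : IsIDF (rootedProd G H v) f) {x : α}
    (hx : f (x, v) ≠ 0) : italianNumber H ≤ copyWeight f x := by
  have h := italianNumber_le_sum (isIDF_raiseAt_restrict_rootedProd hf x)
  rwa [raiseAt_of_ne_zero (φ := fun y => f (x, y)) hx] at h

end RootedProd

theorem stmt0_general {α β : Type*} [Fintype α] [Fintype β]
    (G : SimpleGraph α) (H : SimpleGraph β) (v : β)
    (f : α × β → ℕ) (hf : IsMinIDF (rootedProd G H v) f) (x : α) :
    italianNumber H - 1 ≤ copyWeight f x ∧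
      (copyWeight f x = italianNumber H - 1 → f (x, v) = 0) := by
  have hweight := italianNumber_le_copyWeight_add_one hf.1 x
  refine ⟨by omega, fun heq => ?_⟩
  by_contra hroot
  have hγ := italianNumber_le_copyWeight_of_ne_zero hf.1 hroot
  have hpos := le_copyWeight f x v
  omega

/-- Lemma 1: for a γ_I(G∘_v H)-function f and every x ∈ V(G),
ω(f_x) ≥ γ_I(H) − 1, and if ω(f_x) = γ_I(H) − 1 then f(x) = 0. -/
theorem stmt0 {α β : Type*} [Fintype α] [Nonempty α] [Fintype β]
    (G : SimpleGraph α) (H : SimpleGraph β) (v : β)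
    (f : α × β → ℕ) (hf : IsMinIDF (rootedProd G H v) f) (x : α) :
    italianNumber H - 1 ≤ copyWeight f x ∧
      (copyWeight f x = italianNumber H - 1 → f (x, v) = 0) :=
  stmt0_general G H v f hf x
end

section
/- Let G be a graph, H a graph with root vertex v ∈ V(H), and let f be a γ_I(G∘_v H)-function. Then the set A_f = {x ∈ V(G) : ω(f_x) ≥ γ_I(H)} is a dominating set of G. -/
open Finset

open scoped Classical

/-! If `ω(f_x) < γ_I(H)`, then `f_x` is not an Italian dominating function of `H`. In `G ∘_v H`
only the root of a copy has neighbours outside it, so the failure happens at the root: `f(x) = 0`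
and the missing weight comes from a `G`-neighbour `x'` with `f(x') ≠ 0`. Then every vertex of
`H_{x'}` labelled `0` is a non-root, so `f_{x'}` is an Italian dominating function of `H` and
`x' ∈ A_f`. -/

theorem italianNumber_le_of_isIDF {β : Type*} [Fintype β] {H : SimpleGraph β} {g : β → ℕ}
    (hg : IsIDF H g) : italianNumber H ≤ ∑ y, g y :=
  Nat.sInf_le ⟨g, hg, rfl⟩

section RootedProduct

variable {α β : Type*} [Fintype α] [Fintype β] {G : SimpleGraph α} {H : SimpleGraph β} {v : β}

theorem sum_rootedProd_nbhd (f : α × β → ℕ) (x : α) (y : β) :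
    ∑ w ∈ univ.filter (fun w => (rootedProd G H v).Adj (x, y) w), f w
      = ∑ y' ∈ univ.filter (fun y' => H.Adj y y'), f (x, y')
        + if y = v then ∑ x' ∈ univ.filter (fun x' => G.Adj x x'), f (x', v) else 0 := by
  have hsplit : univ.filter (fun w => (rootedProd G H v).Adj (x, y) w)
      = univ.filter (fun w => x = w.1 ∧ H.Adj y w.2)
        ∪ univ.filter (fun w => y = v ∧ w.2 = v ∧ G.Adj x w.1) := by
    ext w
    simp only [mem_union, mem_filter, mem_univ, true_and]
    rfl
  have hdisj : Disjoint (univ.filter fun w : α × β => x = w.1 ∧ H.Adj y w.2)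
      (univ.filter fun w => y = v ∧ w.2 = v ∧ G.Adj x w.1) := by
    simp only [disjoint_filter]
    rintro ⟨x', y'⟩ - ⟨rfl, -⟩ ⟨-, -, hG⟩
    exact G.loopless.irrefl x hG
  rw [hsplit, sum_union hdisj]
  congr 1
  · simp [sum_filter, Fintype.sum_prod_type, ite_and]
  · split_ifs with hy
    · simp [hy, sum_filter, Fintype.sum_prod_type, ite_and]
    · simp [hy]

variable {f : α × β → ℕ}

theorem IsIDF.isIDF_copy_of_root_ne_zero (hf : IsIDF (rootedProd G H v) f) {x : α}
    (hx : f (x, v) ≠ 0) : IsIDF H (fun y => f (x, y)) := by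
  refine ⟨fun y => hf.1 (x, y), fun y hy => ?_⟩
  have hyv : y ≠ v := by rintro rfl; exact hx hy
  simpa [sum_rootedProd_nbhd, hyv] using hf.2 (x, y) hy

theorem IsIDF.exists_adj_root_ne_zero_of_not_isIDF_copy (hf : IsIDF (rootedProd G H v) f)
    {x : α} (hx : ¬ IsIDF H (fun y => f (x, y))) : ∃ x', G.Adj x x' ∧ f (x', v) ≠ 0 := by
  obtain ⟨y, hy, hHsum⟩ : ∃ y, f (x, y) = 0 ∧
      ∑ y' ∈ univ.filter (fun y' => H.Adj y y'), f (x, y') < 2 := by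
    by_contra! h
    exact hx ⟨fun y => hf.1 (x, y), h⟩
  have hsum := hf.2 (x, y) hy
  rw [sum_rootedProd_nbhd] at hsum
  have hyv : y = v := by
    by_contra hyv
    rw [if_neg hyv] at hsum
    omega
  rw [if_pos hyv] at hsum
  obtain ⟨x', hx', hx'v⟩ := exists_ne_zero_of_sum_ne_zero
    (s := univ.filter (fun x' => G.Adj x x')) (f := fun x' => f (x', v)) (by omega)
  exact ⟨x', (mem_filter.1 hx').2, hx'v⟩

end RootedProduct

theorem stmt1_general {α β : Type*} [Fintype α] [Fintype β]
    (G : SimpleGraph α) (H : SimpleGraph β) (v : β)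
    (f : α × β → ℕ) (hf : IsMinIDF (rootedProd G H v) f) :
    IsDomSet G {x : α | italianNumber H ≤ copyWeight f x} := by
  intro x hx
  obtain ⟨x', hadj, hroot⟩ :=
    hf.1.exists_adj_root_ne_zero_of_not_isIDF_copy fun h => hx (italianNumber_le_of_isIDF h)
  exact ⟨x', italianNumber_le_of_isIDF (hf.1.isIDF_copy_of_root_ne_zero hroot), hadj⟩

/-- Lemma 2: for a γ_I(G∘_v H)-function f, the set
A_f = {x ∈ V(G) : ω(f_x) ≥ γ_I(H)} is a dominating set of G. -/
theorem stmt1 {α β : Type*} [Fintype α] [Nonempty α] [Fintype β]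
    (G : SimpleGraph α) (H : SimpleGraph β) (v : β)
    (f : α × β → ℕ) (hf : IsMinIDF (rootedProd G H v) f) :
    IsDomSet G {x : α | italianNumber H ≤ copyWeight f x} :=
  stmt1_general G H v f hf
end

section
/- For any graph G, any graph H and any vertex v ∈ V(H), the Italian domination number of the rooted product satisfies exactly one of: γ_I(G∘_v H) = n(G)·(γ_I(H) − 1) + γ(G), or γ_I(G∘_v H) = n(G)·(γ_I(H) − 1) + γ_I(G), or γ_I(G∘_v H) = n(G)·γ_I(H). -/
open Finset

open scoped Classical

/-!
Under an Italian dominating function `f` of `G ∘_v H` every copy `H_x` carries weight at least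
`γ_I(H) - 1`, and at least `γ_I(H)` unless its root has value `0` and receives at most `1` from
inside `H_x`: otherwise `f` on `H_x`, with the root raised to `1` if necessary, is an IDF of `H`.
The heavy copies dominate `G`, whence `γ_I(G ∘_v H) ≥ n (γ_I(H) - 1) + γ(G)`.

Conversely, a light copy (weight `γ_I(H) - 1`, root value `0`) may be repeated in every copy, the
roots being relabelled by a `γ_I(G)`-function, or by the indicator of a minimum dominating set of
`G` when the light copy gives its root `1`. If every light copy gives its root `0` and
`γ_I(G ∘_v H) < n (γ_I(H) - 1) + γ_I(G)`, the excess weights of the copies, capped at `2`, are not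
an IDF of `G`. Where this fails, at `x`, the root of the light copy `H_x` gets `2` from a single
neighbour `u` with `f (u, v) = 2`, and `H_u` has weight exactly `γ_I(H)`; putting `H_u` on a minimum
dominating set and `H_x` elsewhere again gives weight `n (γ_I(H) - 1) + γ(G)`. With the bound
`n γ_I(H)`, only the three values remain.
-/

section Italian

variable {γ : Type*} [Fintype γ]

noncomputable def neighborSum (G : SimpleGraph γ) (f : γ → ℕ) (u : γ) : ℕ :=
  ∑ w ∈ univ.filter (fun w => G.Adj u w), f w

variable {G : SimpleGraph γ}

theorem isIDF_iff {f : γ → ℕ} :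
    IsIDF G f ↔ (∀ u, f u ≤ 2) ∧ ∀ u, f u = 0 → 2 ≤ neighborSum G f u :=
  Iff.rfl

theorem neighborSum_mono {f g : γ → ℕ} {u : γ} (h : ∀ w, G.Adj u w → f w ≤ g w) :
    neighborSum G f u ≤ neighborSum G g u :=
  sum_le_sum fun w hw => h w (by simpa using hw)

theorem le_neighborSum (f : γ → ℕ) {u w : γ} (h : G.Adj u w) : f w ≤ neighborSum G f u :=
  single_le_sum (fun _ _ => Nat.zero_le _) (by simpa using h)

theorem neighborSum_update_self (f : γ → ℕ) (u : γ) (c : ℕ) :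
    neighborSum G (Function.update f u c) u = neighborSum G f u :=
  sum_congr rfl fun w hw => Function.update_of_ne (by simp at hw; exact hw.ne') _ _

theorem sum_update_of_eq_zero {f : γ → ℕ} {u : γ} (hu : f u = 0) (c : ℕ) :
    ∑ w, Function.update f u c w = ∑ w, f w + c := by
  rw [sum_update_of_mem (mem_univ u), sum_eq_add_sum_sdiff_singleton_of_mem (mem_univ u) f, hu,
    zero_add, add_comm]

theorem IsIDF.italianNumber_le {f : γ → ℕ} (hf : IsIDF G f) : italianNumber G ≤ ∑ u, f u :=
  Nat.sInf_le ⟨f, hf, rfl⟩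

theorem IsDomSet.dominationNumber_le {D : Finset γ} (hD : IsDomSet G ↑D) :
    dominationNumber G ≤ D.card :=
  Nat.sInf_le ⟨D, hD, rfl⟩

variable (G)

theorem exists_isMinIDF : ∃ f, IsMinIDF G f :=
  Nat.sInf_mem (s := {n | ∃ f : γ → ℕ, IsIDF G f ∧ ∑ u, f u = n})
    ⟨_, fun _ => 1, ⟨fun _ => one_le_two, fun _ h => absurd h one_ne_zero⟩, rfl⟩

theorem exists_isDomSet_card_eq_dominationNumber :
    ∃ D : Finset γ, IsDomSet G ↑D ∧ D.card = dominationNumber G :=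
  Nat.sInf_mem (s := {n | ∃ D : Finset γ, IsDomSet G ↑D ∧ D.card = n})
    ⟨_, univ, fun u hu => by simp at hu, rfl⟩

theorem one_le_italianNumber [Nonempty γ] : 1 ≤ italianNumber G := by
  obtain ⟨f, hf, hsum⟩ := exists_isMinIDF G
  by_contra! h0
  have hz : ∀ u, f u = 0 := fun u => sum_eq_zero_iff.mp (hsum.trans (by omega)) u (mem_univ u)
  obtain ⟨u⟩ := ‹Nonempty γ›
  have := hf.2 u (hz u)
  simp [hz] at this

end Italian

/-- What an Italian dominating function of `G ∘_v H` induces on a copy of `H`: the root `v`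
may receive its missing weight from outside the copy. -/
def IsIDFAwayFrom {β : Type*} [Fintype β] (H : SimpleGraph β) (v : β) (g : β → ℕ) : Prop :=
  (∀ b, g b ≤ 2) ∧ ∀ b, b ≠ v → g b = 0 → 2 ≤ neighborSum H g b

namespace IsIDFAwayFrom

variable {β : Type*} [Fintype β] {H : SimpleGraph β} {v : β} {g : β → ℕ}

theorem of_isIDF (hg : IsIDF H g) : IsIDFAwayFrom H v g :=
  ⟨hg.1, fun b _ => hg.2 b⟩

theorem isIDF (hg : IsIDFAwayFrom H v g) (hv : g v = 0 → 2 ≤ neighborSum H g v) : IsIDF H g := by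
  refine ⟨hg.1, fun b hb => ?_⟩
  by_cases hbv : b = v
  · exact hbv ▸ hv (hbv ▸ hb)
  · exact hg.2 b hbv hb

theorem update (hg : IsIDFAwayFrom H v g) {c : ℕ} (hc : g v ≤ c) (hc2 : c ≤ 2) :
    IsIDFAwayFrom H v (Function.update g v c) := by
  have hle : ∀ b, g b ≤ Function.update g v c b := fun b => by
    rcases eq_or_ne b v with rfl | hb <;> simp [*]
  refine ⟨fun b => ?_, fun b hb h0 => ?_⟩
  · rcases eq_or_ne b v with rfl | hb
    · simpa
    · simpa [hb] using hg.1 b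
  · rw [Function.update_of_ne hb] at h0
    exact (hg.2 b hb h0).trans (neighborSum_mono fun w _ => hle w)

theorem italianNumber_le_sum_add_one (hg : IsIDFAwayFrom H v g) :
    italianNumber H ≤ ∑ b, g b + 1 := by
  by_cases hv : g v = 0
  · have hidf := (hg.update (c := 1) (by omega) one_le_two).isIDF (by simp)
    simpa [sum_update_of_eq_zero hv] using hidf.italianNumber_le
  · exact (hg.isIDF (absurd · hv)).italianNumber_le.trans (Nat.le_succ _)

end IsIDFAwayFrom

section RootedProd

variable {α β : Type*} [Fintype α] [Fintype β] {G : SimpleGraph α} {H : SimpleGraph β} {v : β}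
  {f : α × β → ℕ}

theorem neighborSum_rootedProd (x : α) (y : β) :
    neighborSum (rootedProd G H v) f (x, y) =
      neighborSum H (fun b => f (x, b)) y +
        if y = v then neighborSum G (fun a => f (a, v)) x else 0 := by
  have hsplit : ∀ a b, (if (rootedProd G H v).Adj (x, y) (a, b) then f (a, b) else 0) =
      (if x = a then if H.Adj y b then f (a, b) else 0 else 0) +
        if y = v then if b = v then if G.Adj x a then f (a, b) else 0 else 0 else 0 := by
    intro a b
    have : ¬ (x = a ∧ H.Adj y b ∧ y = v ∧ b = v) := by
      rintro ⟨-, hyb, rfl, rfl⟩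
      exact H.loopless.irrefl _ hyb
    by_cases hx : x = a <;> by_cases hy : y = v <;> by_cases hb : b = v <;>
      simp_all [rootedProd]
  simp only [neighborSum, sum_filter, Fintype.sum_prod_type, hsplit, sum_add_distrib]
  split_ifs <;> simp

theorem isIDF_rootedProd_iff :
    IsIDF (rootedProd G H v) f ↔ (∀ x, IsIDFAwayFrom H v (fun b => f (x, b))) ∧
      ∀ x, f (x, v) = 0 →
        2 ≤ neighborSum H (fun b => f (x, b)) v + neighborSum G (fun a => f (a, v)) x := by
  simp only [isIDF_iff, Prod.forall, neighborSum_rootedProd, IsIDFAwayFrom]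
  constructor
  · rintro ⟨hle, hzero⟩
    exact ⟨fun x => ⟨hle x, fun b hb h0 => by simpa [hb] using hzero x b h0⟩,
      fun x h0 => by simpa using hzero x v h0⟩
  · rintro ⟨hcopy, hroot⟩
    refine ⟨fun x b => (hcopy x).1 b, fun x b h0 => ?_⟩
    rcases eq_or_ne b v with rfl | hb
    · simpa using hroot x h0
    · simpa [hb] using (hcopy x).2 b hb h0

theorem sum_eq_sum_copyWeight (f : α × β → ℕ) : ∑ p, f p = ∑ x, copyWeight f x :=
  Fintype.sum_prod_type f

namespace IsIDF

theorem italianNumber_le_copyWeight_add_one (hf : IsIDF (rootedProd G H v) f) (x : α) :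
    italianNumber H ≤ copyWeight f x + 1 :=
  ((isIDF_rootedProd_iff.1 hf).1 x).italianNumber_le_sum_add_one

theorem italianNumber_le_copyWeight (hf : IsIDF (rootedProd G H v) f) {x : α}
    (hx : f (x, v) = 0 → 2 ≤ neighborSum H (fun b => f (x, b)) v) :
    italianNumber H ≤ copyWeight f x :=
  (((isIDF_rootedProd_iff.1 hf).1 x).isIDF hx).italianNumber_le

theorem root_eq_zero_of_copyWeight_lt (hf : IsIDF (rootedProd G H v) f) {x : α}
    (hx : copyWeight f x < italianNumber H) :
    f (x, v) = 0 ∧ neighborSum H (fun b => f (x, b)) v ≤ 1 := by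
  by_contra! h
  refine hx.not_ge (hf.italianNumber_le_copyWeight fun h0 => ?_)
  have := h h0
  omega

end IsIDF

variable (G H v)

theorem italianNumber_rootedProd_le_of_copies (g : α → β → ℕ)
    (hg : ∀ a, IsIDFAwayFrom H v (g a))
    (hroot : ∀ a, g a v = 0 → 2 ≤ neighborSum H (g a) v + neighborSum G (fun c => g c v) a) :
    italianNumber (rootedProd G H v) ≤ ∑ a, ∑ b, g a b :=
  (isIDF_rootedProd_iff (f := fun p => g p.1 p.2) |>.2 ⟨hg, hroot⟩).italianNumber_le.trans_eq
    (Fintype.sum_prod_type _)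

theorem italianNumber_rootedProd_le_card_mul :
    italianNumber (rootedProd G H v) ≤ Fintype.card α * italianNumber H := by
  obtain ⟨g, hg, hsum⟩ := exists_isMinIDF H
  refine (italianNumber_rootedProd_le_of_copies G H v (fun _ => g)
    (fun _ => .of_isIDF hg) fun _ h0 => (hg.2 v h0).trans (Nat.le_add_right _ _)).trans_eq ?_
  simp [hsum]

/-- Every copy of `H` carries `g`, except that the root of the `a`-th copy carries `r a`. -/
theorem italianNumber_rootedProd_le_of_root {g : β → ℕ} (hg : IsIDFAwayFrom H v g)
    (hgv : g v = 0) (r : α → ℕ) (hr : ∀ a, r a ≤ 2)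
    (hroot : ∀ a, r a = 0 → 2 ≤ neighborSum H g v + neighborSum G r a) :
    italianNumber (rootedProd G H v) ≤ Fintype.card α * ∑ b, g b + ∑ a, r a := by
  refine (italianNumber_rootedProd_le_of_copies G H v (fun a => Function.update g v (r a))
    (fun a => hg.update (hgv ▸ Nat.zero_le _) (hr a)) fun a h0 => ?_).trans_eq ?_
  · simpa [neighborSum_update_self] using hroot a (by simpa using h0)
  · simp [sum_update_of_eq_zero hgv, sum_add_distrib]

variable {G H v}

theorem IsIDF.italianNumber_rootedProd_le_add_italianNumber (hf : IsIDF (rootedProd G H v) f)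
    {x : α} (hx : f (x, v) = 0) :
    italianNumber (rootedProd G H v) ≤ Fintype.card α * copyWeight f x + italianNumber G := by
  obtain ⟨w, hw, hsum⟩ := exists_isMinIDF G
  rw [← hsum]
  exact italianNumber_rootedProd_le_of_root G H v ((isIDF_rootedProd_iff.1 hf).1 x) hx w hw.1
    fun a h0 => (hw.2 a h0).trans (Nat.le_add_left _ _)

theorem IsIDF.italianNumber_rootedProd_le_add_dominationNumber
    (hf : IsIDF (rootedProd G H v) f) {x : α} (hx : f (x, v) = 0)
    (hs : 1 ≤ neighborSum H (fun b => f (x, b)) v) :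
    italianNumber (rootedProd G H v) ≤ Fintype.card α * copyWeight f x + dominationNumber G := by
  obtain ⟨D, hD, hcard⟩ := exists_isDomSet_card_eq_dominationNumber G
  refine (italianNumber_rootedProd_le_of_root G H v ((isIDF_rootedProd_iff.1 hf).1 x) hx
    (fun a => if a ∈ D then 1 else 0) (fun a => by split_ifs <;> omega) fun a h0 => ?_).trans_eq
    (by simp [← hcard, copyWeight])
  obtain ⟨c, hc, hac⟩ := hD a (by simpa using h0)
  have := le_neighborSum (fun a => if a ∈ D then 1 else 0) hac
  simp only [Finset.mem_coe] at hc
  simp only [hc, if_true] at this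
  omega

theorem IsIDF.italianNumber_rootedProd_le_add_dominationNumber_of_root_eq_two
    (hf : IsIDF (rootedProd G H v) f) {x u : α} (hu : f (u, v) = 2)
    (hxu : copyWeight f u = copyWeight f x + 1) :
    italianNumber (rootedProd G H v) ≤ Fintype.card α * copyWeight f x + dominationNumber G := by
  obtain ⟨D, hD, hcard⟩ := exists_isDomSet_card_eq_dominationNumber G
  have hcopy := (isIDF_rootedProd_iff.1 hf).1
  refine (italianNumber_rootedProd_le_of_copies G H v
    (fun a b => if a ∈ D then f (u, b) else f (x, b))
    (fun a => by split_ifs; exacts [hcopy u, hcopy x]) fun a h0 => ?_).trans_eq ?_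
  · have ha : a ∉ D := fun ha => by simp [ha, hu] at h0
    obtain ⟨c, hc, hac⟩ := hD a ha
    have := le_neighborSum (fun c => if c ∈ D then f (u, v) else f (x, v)) hac
    simp only [Finset.mem_coe] at hc
    simp only [hc, if_true] at this
    omega
  · calc ∑ a, ∑ b, (if a ∈ D then f (u, b) else f (x, b))
        = ∑ a, (copyWeight f x + if a ∈ D then 1 else 0) :=
          sum_congr rfl fun a _ => by split_ifs <;> simp only [← hxu, add_zero] <;> rfl
      _ = _ := by simp [sum_add_distrib, hcard]

theorem IsIDF.card_mul_add_dominationNumber_le (hf : IsIDF (rootedProd G H v) f) :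
    Fintype.card α * (italianNumber H - 1) + dominationNumber G ≤ ∑ p, f p := by
  have hk := @one_le_italianNumber _ _ H ⟨v⟩
  set B := univ.filter fun x => italianNumber H ≤ copyWeight f x
  have hB : IsDomSet G ↑B := by
    intro x hx
    have ⟨hx0, hs⟩ := hf.root_eq_zero_of_copyWeight_lt (x := x) (by simpa [B] using hx)
    have hr := (isIDF_rootedProd_iff.1 hf).2 x hx0
    have hG : neighborSum G (fun a => f (a, v)) x ≠ 0 := by omega
    obtain ⟨u, hu, hu0⟩ := exists_ne_zero_of_sum_ne_zero hG
    exact ⟨u, by simpa [B] using hf.italianNumber_le_copyWeight (absurd · hu0),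
      by simpa using hu⟩
  calc Fintype.card α * (italianNumber H - 1) + dominationNumber G
      ≤ ∑ x, (italianNumber H - 1 + if x ∈ B then 1 else 0) := by
        simpa [sum_add_distrib] using hB.dominationNumber_le
    _ ≤ ∑ x, copyWeight f x := sum_le_sum fun x _ => by
        have := hf.italianNumber_le_copyWeight_add_one x
        split_ifs with hxB <;> simp [B] at hxB <;> omega
    _ = ∑ p, f p := (sum_eq_sum_copyWeight f).symm

theorem IsIDF.exists_root_eq_two (hf : IsIDF (rootedProd G H v) f)
    (hlt : ∑ p, f p < Fintype.card α * (italianNumber H - 1) + italianNumber G)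
    (hs : ∀ x, copyWeight f x < italianNumber H → neighborSum H (fun b => f (x, b)) v = 0) :
    ∃ x u, copyWeight f x = italianNumber H - 1 ∧ f (u, v) = 2 ∧
      copyWeight f u = copyWeight f x + 1 := by
  have hk := @one_le_italianNumber _ _ H ⟨v⟩
  set level : α → ℕ := fun y => min 2 (copyWeight f y - (italianNumber H - 1))
  have hlevel : ¬ IsIDF G level := fun h => by
    have hsum : ∑ y, (italianNumber H - 1 + level y) ≤ ∑ p, f p :=
      (sum_le_sum fun y _ => by
        have := hf.italianNumber_le_copyWeight_add_one y
        simp only [level]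
        omega).trans_eq (sum_eq_sum_copyWeight f).symm
    have := h.italianNumber_le
    simp only [sum_add_distrib, sum_const, card_univ, smul_eq_mul] at hsum
    omega
  obtain ⟨x, hx0, hxs⟩ : ∃ x, level x = 0 ∧ neighborSum G level x < 2 := by
    simpa [isIDF_iff, level] using hlevel
  have hxk : copyWeight f x < italianNumber H := by
    simp only [level] at hx0
    omega
  have hxv := (hf.root_eq_zero_of_copyWeight_lt hxk).1
  have hr := (isIDF_rootedProd_iff.1 hf).2 x hxv
  rw [hs x hxk, zero_add] at hr
  obtain ⟨u, hxu, hu⟩ : ∃ u, G.Adj x u ∧ f (u, v) = 2 := by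
    by_contra! h
    -- a neighbour with root value `1` has a copy of weight at least `γ_I(H)`, hence level `≥ 1`
    refine (hr.trans (neighborSum_mono fun c hc => ?_)).not_gt hxs
    have := hf.1 (c, v)
    have := h c hc
    rcases Nat.eq_zero_or_pos (f (c, v)) with h0 | hpos
    · simp [h0]
    · have := hf.italianNumber_le_copyWeight (x := c) (absurd · hpos.ne')
      simp only [level]
      omega
  have hlu : level u ≤ 1 := (le_neighborSum level hxu).trans (by omega)
  have := hf.italianNumber_le_copyWeight (x := u) (by simp [hu])
  have := hf.italianNumber_le_copyWeight_add_one x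
  simp only [level] at hlu
  exact ⟨x, u, by omega, hu, by omega⟩

variable (G H v)

theorem italianNumber_rootedProd_le_add_italianNumber_of_lt
    (hlt : italianNumber (rootedProd G H v) < Fintype.card α * italianNumber H) :
    italianNumber (rootedProd G H v) ≤
      Fintype.card α * (italianNumber H - 1) + italianNumber G := by
  obtain ⟨f, hf, hsum⟩ := exists_isMinIDF (rootedProd G H v)
  obtain ⟨x, hx⟩ : ∃ x, copyWeight f x < italianNumber H := by
    by_contra! h
    have := sum_le_sum fun x (_ : x ∈ univ) => h x
    simp only [sum_const, card_univ, smul_eq_mul, ← sum_eq_sum_copyWeight, hsum] at this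
    omega
  have := hf.italianNumber_le_copyWeight_add_one x
  have hx' : copyWeight f x = italianNumber H - 1 := by omega
  simpa [hx'] using hf.italianNumber_rootedProd_le_add_italianNumber
    (hf.root_eq_zero_of_copyWeight_lt hx).1

theorem italianNumber_rootedProd_le_add_dominationNumber_of_lt
    (hlt : italianNumber (rootedProd G H v) <
      Fintype.card α * (italianNumber H - 1) + italianNumber G) :
    italianNumber (rootedProd G H v) ≤
      Fintype.card α * (italianNumber H - 1) + dominationNumber G := by
  obtain ⟨f, hf, hsum⟩ := exists_isMinIDF (rootedProd G H v)
  rw [← hsum] at hlt ⊢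
  by_cases hs : ∃ x, copyWeight f x < italianNumber H ∧
      neighborSum H (fun b => f (x, b)) v ≠ 0
  · obtain ⟨x, hx, hs⟩ := hs
    have := hf.italianNumber_le_copyWeight_add_one x
    have hx' : copyWeight f x = italianNumber H - 1 := by omega
    simpa [hsum, hx'] using hf.italianNumber_rootedProd_le_add_dominationNumber
      (hf.root_eq_zero_of_copyWeight_lt hx).1 (Nat.one_le_iff_ne_zero.2 hs)
  · push Not at hs
    obtain ⟨x, u, hx, hu, hxu⟩ := hf.exists_root_eq_two hlt hs
    simpa [hsum, hx] using
      hf.italianNumber_rootedProd_le_add_dominationNumber_of_root_eq_two hu hxu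

end RootedProd

theorem stmt5_general {α β : Type*} [Fintype α] [Fintype β]
    (G : SimpleGraph α) (H : SimpleGraph β) (v : β) :
    italianNumber (rootedProd G H v) =
        Fintype.card α * (italianNumber H - 1) + dominationNumber G ∨
      italianNumber (rootedProd G H v) =
        Fintype.card α * (italianNumber H - 1) + italianNumber G ∨
      italianNumber (rootedProd G H v) = Fintype.card α * italianNumber H := by
  obtain ⟨f, hf, hsum⟩ := exists_isMinIDF (rootedProd G H v)
  have hlower := hsum ▸ hf.card_mul_add_dominationNumber_le
  rcases (italianNumber_rootedProd_le_card_mul G H v).eq_or_lt with h | h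
  · exact Or.inr (Or.inr h)
  rcases (italianNumber_rootedProd_le_add_italianNumber_of_lt G H v h).eq_or_lt with h' | h'
  · exact Or.inr (Or.inl h')
  exact Or.inl ((italianNumber_rootedProd_le_add_dominationNumber_of_lt G H v h').antisymm hlower)

/-- Theorem, Trichotomy: for any G, H and v ∈ V(H),
γ_I(G∘_v H) equals n(G)(γ_I(H)−1)+γ(G), or n(G)(γ_I(H)−1)+γ_I(G), or n(G)γ_I(H). -/
theorem stmt5 {α β : Type*} [Fintype α] [Nonempty α] [Fintype β]
    (G : SimpleGraph α) (H : SimpleGraph β) (v : β) :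
    italianNumber (rootedProd G H v) =
        Fintype.card α * (italianNumber H - 1) + dominationNumber G ∨
      italianNumber (rootedProd G H v) =
        Fintype.card α * (italianNumber H - 1) + italianNumber G ∨
      italianNumber (rootedProd G H v) = Fintype.card α * italianNumber H :=
  stmt5_general G H v
end

section
/- Let G and H be graphs and let v ∈ V(H). If n(H) ≥ 3, then γ_I(G∘_v H) ≥ 2·n(G), and equality holds if and only if γ_I(H) = 2. -/
open Finset

open scoped Classical

/-!
Every copy of `H` carries weight at least 2 under an Italian dominating function of `G ∘_v H`:
the copy has at least two non-root vertices, whose neighbourhoods lie inside the copy, so either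
one of them has value 0 and sees weight 2 in the copy, or their values already add up to 2.
Lifting a `γ_I(H)`-function to every copy gives `γ_I(G ∘_v H) ≤ n(G) γ_I(H)`. Conversely, in an
IDF of weight `2 n(G)` every copy has weight exactly 2, and its restriction to a copy whose root
has a nonzero value (or to any copy, if all roots have value 0) is an IDF of `H`.
-/

namespace ItalianDomination

variable {α β : Type*} [Fintype α] [Fintype β]

lemma italianNumber_le {K : SimpleGraph α} {f : α → ℕ} (hf : IsIDF K f) :
    italianNumber K ≤ ∑ u, f u :=
  Nat.sInf_le ⟨f, hf, rfl⟩

lemma exists_isMinIDF (K : SimpleGraph α) : ∃ f, IsMinIDF K f :=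
  Nat.sInf_mem (s := {n | ∃ f : α → ℕ, IsIDF K f ∧ ∑ u, f u = n})
    ⟨_, fun _ => 2, ⟨fun _ => le_rfl, fun _ h => by simp at h⟩, rfl⟩

lemma le_italianNumber {K : SimpleGraph α} {n : ℕ} (h : ∀ f, IsIDF K f → n ≤ ∑ u, f u) :
    n ≤ italianNumber K := by
  obtain ⟨f, hf, hw⟩ := exists_isMinIDF K
  exact hw ▸ h f hf

lemma two_le_sum_of_two_le_card (K : SimpleGraph β) (g : β → ℕ) {s : Finset β} (hs : 2 ≤ #s)
    (hg : ∀ u ∈ s, g u = 0 → 2 ≤ ∑ w ∈ Finset.univ.filter (fun w => K.Adj u w), g w) :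
    2 ≤ ∑ u, g u := by
  by_cases hzero : ∃ u ∈ s, g u = 0
  · obtain ⟨u, hu, h0⟩ := hzero
    exact (hg u hu h0).trans (sum_le_sum_of_subset (filter_subset _ _))
  · push Not at hzero
    calc 2 ≤ #s := hs
      _ = ∑ _u ∈ s, 1 := card_eq_sum_ones s
      _ ≤ ∑ u ∈ s, g u := sum_le_sum fun u hu => Nat.one_le_iff_ne_zero.2 (hzero u hu)
      _ ≤ ∑ u, g u := sum_le_sum_of_subset (subset_univ s)

lemma two_le_italianNumber (K : SimpleGraph β) (hK : 2 ≤ Fintype.card β) :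
    2 ≤ italianNumber K :=
  le_italianNumber fun f hf => two_le_sum_of_two_le_card K f (s := univ) hK fun u _ => hf.2 u

section RootedProduct

variable (G : SimpleGraph α) (H : SimpleGraph β) (v : β)

lemma sum_adj_rootedProd (f : α × β → ℕ) (x : α) (y : β) :
    ∑ p ∈ Finset.univ.filter (fun p => (rootedProd G H v).Adj (x, y) p), f p =
      ∑ w ∈ Finset.univ.filter (fun w => H.Adj y w), f (x, w) +
        if y = v then ∑ x' ∈ Finset.univ.filter (fun x' => G.Adj x x'), f (x', v) else 0 := by
  have hsplit : ∀ p : α × β, (if (rootedProd G H v).Adj (x, y) p then f p else 0) =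
      (if x = p.1 ∧ H.Adj y p.2 then f p else 0) +
        if y = v ∧ p.2 = v ∧ G.Adj x p.1 then f p else 0 := by
    rintro ⟨a, b⟩
    by_cases hxa : x = a
    · subst hxa
      simp [rootedProd]
    · simp [rootedProd, hxa]
  rw [sum_filter, sum_congr rfl fun p _ => hsplit p, sum_add_distrib]
  congr 1
  · simp [Fintype.sum_prod_type, ite_and, sum_filter]
  · split_ifs with hy
    · simp [Fintype.sum_prod_type, hy, sum_filter, ite_and]
    · simp [hy]

lemma isIDF_rootedProd_comp_snd {g : β → ℕ} (hg : IsIDF H g) :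
    IsIDF (rootedProd G H v) (fun p => g p.2) := by
  refine ⟨fun p => hg.1 p.2, ?_⟩
  rintro ⟨x, y⟩ h0
  rw [sum_adj_rootedProd]
  exact (hg.2 y h0).trans (Nat.le_add_right _ _)

lemma italianNumber_rootedProd_le :
    italianNumber (rootedProd G H v) ≤ Fintype.card α * italianNumber H := by
  obtain ⟨g, hg, hw⟩ := exists_isMinIDF H
  calc italianNumber (rootedProd G H v) ≤ ∑ p : α × β, g p.2 :=
        italianNumber_le (isIDF_rootedProd_comp_snd G H v hg)
    _ = Fintype.card α * italianNumber H := by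
        simp [Fintype.sum_prod_type, hw]

lemma sum_eq_sum_copyWeight (f : α × β → ℕ) : ∑ p, f p = ∑ x, copyWeight f x :=
  Fintype.sum_prod_type f

variable {G H v}

lemma two_le_sum_adj_copy {f : α × β → ℕ} (hf : IsIDF (rootedProd G H v) f) {x : α} {y : β}
    (hy : y ≠ v) (h0 : f (x, y) = 0) :
    2 ≤ ∑ w ∈ Finset.univ.filter (fun w => H.Adj y w), f (x, w) := by
  simpa [sum_adj_rootedProd, hy] using hf.2 (x, y) h0

lemma two_le_copyWeight (hH : 3 ≤ Fintype.card β) {f : α × β → ℕ}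
    (hf : IsIDF (rootedProd G H v) f) (x : α) : 2 ≤ copyWeight f x :=
  two_le_sum_of_two_le_card H (fun y => f (x, y)) (s := univ.erase v)
    (by rw [card_erase_of_mem (mem_univ v), card_univ]; omega)
    fun _ hy => two_le_sum_adj_copy hf (ne_of_mem_erase hy)

variable (G H v) in
lemma two_mul_card_le_italianNumber_rootedProd (hH : 3 ≤ Fintype.card β) :
    2 * Fintype.card α ≤ italianNumber (rootedProd G H v) :=
  le_italianNumber fun f hf =>
    calc 2 * Fintype.card α = ∑ _x : α, 2 := by simp [mul_comm]
      _ ≤ ∑ x, copyWeight f x := sum_le_sum fun x _ => two_le_copyWeight hH hf x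
      _ = ∑ p, f p := (sum_eq_sum_copyWeight f).symm

lemma isIDF_copy {f : α × β → ℕ} (hf : IsIDF (rootedProd G H v) f) {x : α}
    (hroot : f (x, v) = 0 → ∀ x', G.Adj x x' → f (x', v) = 0) :
    IsIDF H (fun y => f (x, y)) := by
  refine ⟨fun y => hf.1 (x, y), fun y h0 => ?_⟩
  by_cases hy : y = v
  · subst hy
    have hG : ∑ x' ∈ Finset.univ.filter (fun x' => G.Adj x x'), f (x', y) = 0 :=
      sum_eq_zero fun x' hx' => hroot h0 x' (mem_filter.1 hx').2
    simpa [sum_adj_rootedProd, hG] using hf.2 (x, y) h0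
  · exact two_le_sum_adj_copy hf hy h0

lemma italianNumber_eq_two_of_italianNumber_rootedProd [Nonempty α] (hH : 3 ≤ Fintype.card β)
    (heq : italianNumber (rootedProd G H v) = 2 * Fintype.card α) : italianNumber H = 2 := by
  obtain ⟨f, hf, hw⟩ := exists_isMinIDF (rootedProd G H v)
  have hcopy : ∀ x, copyWeight f x = 2 := by
    have hsum : ∑ _x : α, 2 = ∑ x, copyWeight f x := by
      rw [← sum_eq_sum_copyWeight, hw, heq]
      simp [mul_comm]
    intro x
    exact ((sum_eq_sum_iff_of_le fun x _ => two_le_copyWeight hH hf x).1 hsum x (mem_univ x)).symm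
  -- a copy whose root has a nonzero value; if every root has value 0, any copy will do
  obtain ⟨x, hroot⟩ : ∃ x, f (x, v) = 0 → ∀ x', G.Adj x x' → f (x', v) = 0 := by
    by_contra! h
    obtain ⟨-, x', -, hx'⟩ := h (Classical.arbitrary α)
    exact hx' (h x').1
  exact le_antisymm ((italianNumber_le (isIDF_copy hf hroot)).trans (hcopy x).le)
    (two_le_italianNumber H (by omega))

end RootedProduct

end ItalianDomination

/-- Corollary: if n(H) ≥ 3, then γ_I(G∘_v H) ≥ 2n(G), with equality
iff γ_I(H) = 2. -/
theorem stmt8 {α β : Type*} [Fintype α] [Nonempty α] [Fintype β]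
    (G : SimpleGraph α) (H : SimpleGraph β) (v : β) (hH : 3 ≤ Fintype.card β) :
    2 * Fintype.card α ≤ italianNumber (rootedProd G H v) ∧
      (italianNumber (rootedProd G H v) = 2 * Fintype.card α ↔ italianNumber H = 2) := by
  have hlower := ItalianDomination.two_mul_card_le_italianNumber_rootedProd G H v hH
  refine ⟨hlower, ItalianDomination.italianNumber_eq_two_of_italianNumber_rootedProd hH,
    fun hI => ?_⟩
  have hupper := ItalianDomination.italianNumber_rootedProd_le G H v
  rw [hI, mul_comm] at hupper
  exact le_antisymm hupper hlower
end
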